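/- arXiv:1310.0401 — 3 statements merged into one kernel-verified Lean document; each statement's English description precedes it below -/
import Mathlib

section
/- Let p ∈ (0,1), q := 1−p, let (X_j)_{j≥0} be i.i.d. {0,1}-valued random variables with P(X_j = 1) = p, let Z_n := #{0 ≤ j ≤ n−1 : X_j ≠ X_{j+1}}, and for an integer K ≥ 1 let τ_{2K} := inf{n ≥ 1 : Z_n = 2K} be the index of the 2K-th changeover. Then τ_{2K} has the same distribution as H_1 + T_1 + ⋯ + H_K + T_K, where H_1, …, H_K, T_1, …, T_K are independent, each H_i is geometric with P(H_i = m) = q(1−q)^{m−1} (m ≥ 1) and each T_i is geometric with P(T_i = m) = p(1−p)^{m−1} (m ≥ 1); that is, P(τ_{2K} = n) = P(H_1 + T_1 + ⋯ + H_K + T_K = n) for every integer n. -/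
/-!
Weights of binary words are read off generating functions. A run of `m ≥ 1` equal letters of
probability `a` has weight `a ^ m`, so a run has generating function `R a = a x / (1 - a x)`, and
the words made of `k` maximal runs, the last one of letter `b`, have generating function
`R (P b) * R (P !b) * ⋯` (`k` factors); for `k = 2K` this is `(R p * R q) ^ K` whichever letter
the word ends with. Since `(Z n, X n)` is a Markov chain whose one-step recursion is the
one-letter recursion of these coefficients, `P(Z n = k, X n = b)` is the coefficient of
`x ^ (n + 1)` for `k + 1` runs ending in `b`. Now `τ = n + 1` iff `X₀ … Xₙ` has `2K` runs and
`Xₙ₊₁ ≠ Xₙ`, so `P(τ = n + 1)` is the coefficient of `x ^ (n + 1)` in `(R p * R q) ^ K`. On the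
other side, the generating function of a sum of independent variables is the product of theirs,
and `q p ^ (h - 1) * p q ^ (t - 1) = p ^ h q ^ t` makes it `(R p * R q) ^ K` too. As both sides
are probability distributions on `ℕ`, they also agree at `0`.
-/

open MeasureTheory ProbabilityTheory Finset
open scoped ENNReal

section RunSeries

open PowerSeries

variable {R : Type*} [CommSemiring R]

noncomputable def geomSeries (a : R) : R⟦X⟧ := mk (a ^ ·)

theorem geomSeries_eq_one_add (a : R) : geomSeries a = 1 + C a * X * geomSeries a := by
  ext (_ | n) <;> simp [geomSeries, coeff_one, mul_assoc, pow_succ']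

noncomputable def runSeries (a : R) : R⟦X⟧ := C a * X * geomSeries a

/-- The coefficient of `X ^ n` is the total weight `∏ j, P (w j)` of the words `w` of length `n`
made of `k` maximal runs, the last one of letter `b`. -/
noncomputable def runsSeries (P : Bool → R) : ℕ → Bool → R⟦X⟧
  | 0, _ => 1
  | k + 1, b => runSeries (P b) * runsSeries P k (!b)

theorem runsSeries_succ (P : Bool → R) (k : ℕ) (b : Bool) :
    runsSeries P (k + 1) b = C (P b) * X * (runsSeries P k (!b) + runsSeries P (k + 1) b) := by
  simp only [runsSeries, runSeries]
  nth_rw 1 [geomSeries_eq_one_add]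
  ring

theorem coeff_zero_runsSeries_succ (P : Bool → R) (k : ℕ) (b : Bool) :
    coeff 0 (runsSeries P (k + 1) b) = 0 := by
  simp [runsSeries, runSeries, mul_assoc]

theorem coeff_succ_runsSeries_succ (P : Bool → R) (n k : ℕ) (b : Bool) :
    coeff (n + 1) (runsSeries P (k + 1) b) =
      P b * (coeff n (runsSeries P k (!b)) + coeff n (runsSeries P (k + 1) b)) := by
  conv_lhs => rw [runsSeries_succ, mul_assoc, coeff_C_mul, coeff_succ_X_mul, map_add]

theorem runsSeries_two_mul (P : Bool → R) (K : ℕ) (b : Bool) :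
    runsSeries P (2 * K) b = (runSeries (P true) * runSeries (P false)) ^ K := by
  induction K with
  | zero => rfl
  | succ K ih =>
    rw [show 2 * (K + 1) = 2 * K + 1 + 1 by ring, runsSeries, runsSeries, Bool.not_not, ih,
      pow_succ]
    cases b <;> simp only [Bool.not_true, Bool.not_false] <;> ring

end RunSeries

noncomputable def bernoulliWeight (p : ℝ) (b : Bool) : ℝ≥0∞ :=
  ENNReal.ofReal (if b then p else 1 - p)

theorem bernoulliWeight_true_add_false {p : ℝ} (hp₀ : 0 ≤ p) (hp₁ : p ≤ 1) :
    bernoulliWeight p true + bernoulliWeight p false = 1 := by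
  simp only [bernoulliWeight, if_true, Bool.false_eq_true, if_false]
  rw [← ENNReal.ofReal_add hp₀ (by linarith), add_sub_cancel, ENNReal.ofReal_one]

theorem measure_eq_bernoulliWeight {Ω : Type*} [MeasurableSpace Ω] {μ : Measure Ω}
    [IsProbabilityMeasure μ] {Y : Ω → Bool} (hY : Measurable Y) {p : ℝ} (hp₀ : 0 ≤ p)
    (h : μ {ω | Y ω = true} = ENNReal.ofReal p) (b : Bool) :
    μ {ω | Y ω = b} = bernoulliWeight p b := by
  cases b
  · have hcompl : {ω | Y ω = false} = {ω | Y ω = true}ᶜ := by ext; simp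
    rw [hcompl, prob_compl_eq_one_sub (measurableSet_eq_fun hY measurable_const), h,
      bernoulliWeight, if_neg Bool.false_ne_true, ENNReal.ofReal_sub 1 hp₀, ENNReal.ofReal_one]
  · exact h

section LawSeries

open PowerSeries

variable {Ω : Type*} [MeasurableSpace Ω]

noncomputable def lawSeries (μ : Measure Ω) (Y : Ω → ℕ) : ℝ≥0∞⟦X⟧ := mk fun n => μ (Y ⁻¹' {n})

variable {μ : Measure Ω}

theorem coeff_lawSeries (Y : Ω → ℕ) (n : ℕ) : coeff n (lawSeries μ Y) = μ (Y ⁻¹' {n}) :=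
  coeff_mk _ _

theorem lawSeries_zero [IsProbabilityMeasure μ] : lawSeries μ 0 = 1 := by
  ext n
  rcases eq_or_ne n 0 with rfl | hn
  · simp [coeff_lawSeries, Set.preimage]
  · simp [coeff_lawSeries, coeff_one, Set.preimage, hn.symm, hn]

theorem ProbabilityTheory.IndepFun.lawSeries_add {U V : Ω → ℕ} (hUV : IndepFun U V μ)
    (hU : Measurable U) (hV : Measurable V) :
    lawSeries μ (U + V) = lawSeries μ U * lawSeries μ V := by
  ext n
  have hfiber : (U + V) ⁻¹' {n} = ⋃ p ∈ antidiagonal n, U ⁻¹' {p.1} ∩ V ⁻¹' {p.2} := by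
    ext ω
    simp
  rw [coeff_mul, coeff_lawSeries, hfiber, measure_biUnion_finset]
  · refine sum_congr rfl fun p _ => ?_
    rw [hUV.measure_inter_preimage_eq_mul _ _ (measurableSet_singleton _)
      (measurableSet_singleton _), coeff_lawSeries, coeff_lawSeries]
  · intro p _ q _ hpq
    refine Set.disjoint_left.2 fun ω hωp hωq => hpq ?_
    simp only [Set.mem_inter_iff, Set.mem_preimage, Set.mem_singleton_iff] at hωp hωq
    exact Prod.ext (hωp.1.symm.trans hωq.1) (hωp.2.symm.trans hωq.2)
  · exact fun p _ => (hU (measurableSet_singleton _)).inter (hV (measurableSet_singleton _))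

theorem ProbabilityTheory.iIndepFun.lawSeries_sum [IsProbabilityMeasure μ] {ι : Type*}
    {Y : ι → Ω → ℕ} (hY : iIndepFun Y μ) (hmY : ∀ i, Measurable (Y i)) (s : Finset ι) :
    lawSeries μ (∑ i ∈ s, Y i) = ∏ i ∈ s, lawSeries μ (Y i) := by
  classical
  induction s using Finset.induction_on with
  | empty => simp [lawSeries_zero]
  | insert i s hi ih =>
    rw [sum_insert hi, prod_insert hi, add_comm,
      IndepFun.lawSeries_add (hY.indepFun_finsetSum_of_notMem hmY hi)
        (by fun_prop) (hmY i), ih, mul_comm]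

theorem lawSeries_eq_C_mul_X_mul_geomSeries {Y : Ω → ℕ} (hpos : ∀ ω, 1 ≤ Y ω) {a b : ℝ} (ha : 0 ≤ a)
    (hb : 0 ≤ b) (hY : ∀ m, 1 ≤ m → μ {ω | Y ω = m} = ENNReal.ofReal (a * b ^ (m - 1))) :
    lawSeries μ Y = C (ENNReal.ofReal a) * X * geomSeries (ENNReal.ofReal b) := by
  ext (_ | m)
  · have : Y ⁻¹' {0} = ∅ := Set.eq_empty_of_forall_notMem fun ω (hω : Y ω = 0) => by
      simpa [hω] using hpos ω
    simp [coeff_lawSeries, this, mul_assoc]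
  · rw [coeff_lawSeries, mul_assoc, coeff_C_mul, coeff_succ_X_mul, geomSeries, coeff_mk,
      ← ENNReal.ofReal_pow hb, ← ENNReal.ofReal_mul ha]
    exact hY (m + 1) m.succ_pos

theorem measure_sum_eq_coeff_runSeries_mul_pow [IsProbabilityMeasure μ] {p : ℝ} (hp₀ : 0 ≤ p)
    (hp₁ : p ≤ 1) {K : ℕ} {HT : Bool × Fin K → Ω → ℕ} (hmHT : ∀ b, Measurable (HT b))
    (hHTindep : iIndepFun HT μ) (hHTpos : ∀ b ω, 1 ≤ HT b ω)
    (hHdist : ∀ i m, 1 ≤ m → μ {ω | HT (false, i) ω = m} = ENNReal.ofReal ((1 - p) * p ^ (m - 1)))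
    (hTdist : ∀ i m, 1 ≤ m → μ {ω | HT (true, i) ω = m} = ENNReal.ofReal (p * (1 - p) ^ (m - 1)))
    (n : ℕ) :
    μ {ω | ∑ b, HT b ω = n} =
      coeff n ((runSeries (bernoulliWeight p true) * runSeries (bernoulliWeight p false)) ^ K) := by
  have hq₀ : 0 ≤ 1 - p := by linarith
  have hlaw : lawSeries μ (∑ b, HT b) =
      (runSeries (bernoulliWeight p true) * runSeries (bernoulliWeight p false)) ^ K := by
    rw [hHTindep.lawSeries_sum hmHT, Fintype.prod_prod_type, Fintype.prod_bool]
    simp only [lawSeries_eq_C_mul_X_mul_geomSeries (hHTpos _) hp₀ hq₀ (hTdist _),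
      lawSeries_eq_C_mul_X_mul_geomSeries (hHTpos _) hq₀ hp₀ (hHdist _), prod_const, card_univ,
      Fintype.card_fin, ← mul_pow, runSeries, bernoulliWeight, if_true, Bool.false_eq_true,
      if_false]
    ring
  have hfiber : {ω | ∑ b, HT b ω = n} = (∑ b, HT b) ⁻¹' {n} := by
    ext
    simp
  rw [hfiber, ← coeff_lawSeries, hlaw]

end LawSeries

section Changeovers

variable {α : Type*} [DecidableEq α] (x : ℕ → α)

def changeovers (n : ℕ) : ℕ := #{j ∈ range n | x j ≠ x (j + 1)}

@[simp] theorem changeovers_zero : changeovers x 0 = 0 := rfl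

noncomputable def changeoverTime (k : ℕ) : ℕ := sInf {n | 1 ≤ n ∧ changeovers x n = k}

theorem changeovers_succ (n : ℕ) :
    changeovers x (n + 1) = changeovers x n + if x n ≠ x (n + 1) then 1 else 0 := by
  simp only [changeovers, range_add_one, filter_insert]
  split_ifs <;> simp [card_insert_of_notMem]

theorem changeovers_mono : Monotone (changeovers x) :=
  fun _ _ h => card_le_card (filter_subset_filter _ (range_subset_range.2 h))

theorem changeoverTime_succ_eq_succ_iff (k m : ℕ) :
    changeoverTime x (k + 1) = m + 1 ↔ changeovers x m = k ∧ x m ≠ x (m + 1) := by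
  rw [changeoverTime]
  constructor
  · intro h
    have hsucc : changeovers x (m + 1) = k + 1 :=
      (h ▸ Nat.sInf_mem (Nat.nonempty_of_pos_sInf (by omega))).2
    have hm : m ∉ {n | 1 ≤ n ∧ changeovers x n = k + 1} := Nat.notMem_of_lt_sInf (by omega)
    rw [changeovers_succ] at hsucc
    split_ifs at hsucc with hx
    · exact ⟨by omega, hx⟩
    · refine absurd ⟨Nat.pos_of_ne_zero fun hm₀ => ?_, by omega⟩ hm
      simp [hm₀] at hsucc
  · rintro ⟨hk, hne⟩
    have hsucc : changeovers x (m + 1) = k + 1 := by simp [changeovers_succ, hk, hne]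
    refine le_antisymm (Nat.sInf_le ⟨m.succ_pos, hsucc⟩) (le_csInf ⟨_, m.succ_pos, hsucc⟩ ?_)
    rintro l ⟨-, hl⟩
    by_contra! hlt
    have := changeovers_mono x (Nat.le_of_lt_succ hlt)
    omega

end Changeovers

section CoinFlips

variable {Ω : Type*}

theorem measurable_iSup_comap {β : Type*} [mβ : MeasurableSpace β] (X : ℕ → Ω → β) {j n : ℕ}
    (h : j ≤ n) : Measurable[⨆ i ∈ Set.Iic n, mβ.comap (X i)] (X j) :=
  (comap_measurable (X j)).mono (le_iSup₂ (f := fun i (_ : i ∈ Set.Iic n) => mβ.comap (X i)) j h)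
    le_rfl

theorem measurableSet_changeovers_eq_and (X : ℕ → Ω → Bool) (n k : ℕ) (b : Bool) :
    MeasurableSet[⨆ j ∈ Set.Iic n, MeasurableSpace.comap (X j) inferInstance]
      {ω | changeovers (X · ω) n = k ∧ X n ω = b} := by
  refine MeasurableSet.inter (measurableSet_eq_fun ?_ measurable_const)
    (measurable_iSup_comap X le_rfl (measurableSet_singleton b))
  simp only [changeovers, card_filter]
  refine Finset.measurable_sum _ fun j hj => Measurable.ite ?_ measurable_const measurable_const
  have hj : j < n := mem_range.1 hj
  exact (measurableSet_eq_fun (measurable_iSup_comap X hj.le)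
    (measurable_iSup_comap X (Nat.succ_le_of_lt hj))).compl

theorem setOf_changeoverTime_eq_succ (X : ℕ → Ω → Bool) (k m : ℕ) :
    {ω | changeoverTime (X · ω) (k + 1) = m + 1} =
      ({ω | changeovers (X · ω) m = k ∧ X m ω = false} ∩ {ω | X (m + 1) ω = true}) ∪
      ({ω | changeovers (X · ω) m = k ∧ X m ω = true} ∩ {ω | X (m + 1) ω = false}) := by
  ext ω
  simp only [Set.mem_ofPred_eq, Set.mem_inter_iff, Set.mem_union, changeoverTime_succ_eq_succ_iff]
  cases X m ω <;> cases X (m + 1) ω <;> simp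

variable [MeasurableSpace Ω] {μ : Measure Ω}

theorem ProbabilityTheory.iIndepFun.measure_inter_preimage_succ {β : Type*}
    [mβ : MeasurableSpace β] {X : ℕ → Ω → β} (hX : iIndepFun X μ) (hmX : ∀ j, Measurable (X j))
    {n : ℕ} {A : Set Ω} (hA : MeasurableSet[⨆ j ∈ Set.Iic n, mβ.comap (X j)] A) {B : Set β}
    (hB : MeasurableSet B) : μ (A ∩ X (n + 1) ⁻¹' B) = μ A * μ (X (n + 1) ⁻¹' B) := by
  have hindep := indep_iSup_of_disjoint (fun j => (hmX j).comap_le)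
    ((iIndepFun_iff_iIndep _ _ _).1 hX) (S := Set.Iic n) (T := {n + 1}) (by simp)
  exact (Indep_iff _ _ _).1 hindep _ _ hA
    (le_iSup₂ (f := fun j (_ : j ∈ ({n + 1} : Set ℕ)) => mβ.comap (X j)) (n + 1) rfl _
      ⟨B, hB, rfl⟩)

variable {X : ℕ → Ω → Bool}

theorem measurableSet_changeovers_eq_and_inter (hmX : ∀ j, Measurable (X j)) (n k : ℕ)
    (b c : Bool) :
    MeasurableSet ({ω | changeovers (X · ω) n = k ∧ X n ω = b} ∩ {ω | X (n + 1) ω = c}) :=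
  ((iSup₂_le fun j _ => (hmX j).comap_le) _ (measurableSet_changeovers_eq_and X n k b)).inter
    (hmX _ (measurableSet_singleton c))

variable {P : Bool → ℝ≥0∞}

theorem measure_changeovers_eq_and_inter (hX : iIndepFun X μ) (hmX : ∀ j, Measurable (X j))
    (hP : ∀ j b, μ {ω | X j ω = b} = P b) (n k : ℕ) (b c : Bool) :
    μ ({ω | changeovers (X · ω) n = k ∧ X n ω = b} ∩ {ω | X (n + 1) ω = c}) =
      μ {ω | changeovers (X · ω) n = k ∧ X n ω = b} * P c := by
  rw [← hP (n + 1) c]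
  exact hX.measure_inter_preimage_succ hmX (measurableSet_changeovers_eq_and X n k b)
    (measurableSet_singleton c)

open PowerSeries in
theorem measure_changeovers_eq_and_eq_coeff (hX : iIndepFun X μ) (hmX : ∀ j, Measurable (X j))
    (hP : ∀ j b, μ {ω | X j ω = b} = P b) (n k : ℕ) (b : Bool) :
    μ {ω | changeovers (X · ω) n = k ∧ X n ω = b} = coeff (n + 1) (runsSeries P (k + 1) b) := by
  induction n generalizing k b with
  | zero =>
    rw [coeff_succ_runsSeries_succ, coeff_zero_runsSeries_succ, add_zero]
    rcases k with _ | k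
    · simp [runsSeries, hP]
    · simp [coeff_zero_runsSeries_succ]
  | succ n ih =>
    rw [coeff_succ_runsSeries_succ, ← ih k b]
    rcases k with _ | k
    · have hsplit : {ω | changeovers (X · ω) (n + 1) = 0 ∧ X (n + 1) ω = b} =
          {ω | changeovers (X · ω) n = 0 ∧ X n ω = b} ∩ {ω | X (n + 1) ω = b} := by
        ext ω
        simp only [Set.mem_ofPred_eq, Set.mem_inter_iff, changeovers_succ]
        cases X n ω <;> cases X (n + 1) ω <;> cases b <;> simp
      rw [hsplit, measure_changeovers_eq_and_inter hX hmX hP]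
      simp [runsSeries, mul_comm]
    · have hsplit : {ω | changeovers (X · ω) (n + 1) = k + 1 ∧ X (n + 1) ω = b} =
          ({ω | changeovers (X · ω) n = k ∧ X n ω = !b} ∩ {ω | X (n + 1) ω = b}) ∪
          ({ω | changeovers (X · ω) n = k + 1 ∧ X n ω = b} ∩ {ω | X (n + 1) ω = b}) := by
        ext ω
        simp only [Set.mem_ofPred_eq, Set.mem_inter_iff, Set.mem_union, changeovers_succ]
        cases X n ω <;> cases X (n + 1) ω <;> cases b <;> simp
      rw [hsplit, measure_union _ (measurableSet_changeovers_eq_and_inter hmX n _ b b),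
        measure_changeovers_eq_and_inter hX hmX hP,
        measure_changeovers_eq_and_inter hX hmX hP, ih k (!b)]
      · ring
      refine Set.disjoint_left.2 ?_
      rintro _ ⟨⟨-, h₁⟩, -⟩ ⟨⟨-, h₂⟩, -⟩
      simp_all

theorem measurableSet_changeoverTime_eq_succ (hmX : ∀ j, Measurable (X j)) (k m : ℕ) :
    MeasurableSet {ω | changeoverTime (X · ω) (k + 1) = m + 1} := by
  rw [setOf_changeoverTime_eq_succ X]
  exact (measurableSet_changeovers_eq_and_inter hmX m k _ _).union
    (measurableSet_changeovers_eq_and_inter hmX m k _ _)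

open PowerSeries in
theorem measure_changeoverTime_eq_succ (hX : iIndepFun X μ) (hmX : ∀ j, Measurable (X j))
    (hP : ∀ j b, μ {ω | X j ω = b} = P b) (k m : ℕ) :
    μ {ω | changeoverTime (X · ω) (k + 1) = m + 1} =
      coeff (m + 1) (runsSeries P (k + 1) false) * P true +
        coeff (m + 1) (runsSeries P (k + 1) true) * P false := by
  rw [setOf_changeoverTime_eq_succ X,
    measure_union _ (measurableSet_changeovers_eq_and_inter hmX m k _ _),
    measure_changeovers_eq_and_inter hX hmX hP, measure_changeovers_eq_and_inter hX hmX hP,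
    measure_changeovers_eq_and_eq_coeff hX hmX hP, measure_changeovers_eq_and_eq_coeff hX hmX hP]
  refine Set.disjoint_left.2 ?_
  rintro _ ⟨⟨-, h₁⟩, -⟩ ⟨⟨-, h₂⟩, -⟩
  simp_all

end CoinFlips

theorem measure_preimage_zero_add_tsum_succ {Ω : Type*} [MeasurableSpace Ω] (μ : Measure Ω)
    [IsProbabilityMeasure μ] {f : Ω → ℕ} (hf : ∀ m, MeasurableSet (f ⁻¹' {m + 1})) :
    μ (f ⁻¹' {0}) + ∑' m, μ (f ⁻¹' {m + 1}) = 1 := by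
  have hzero : f ⁻¹' {0} = (⋃ m, f ⁻¹' {m + 1})ᶜ := by
    ext ω
    simp only [Set.mem_preimage, Set.mem_singleton_iff, Set.mem_compl_iff, Set.mem_iUnion,
      not_exists]
    exact ⟨fun h i => by omega, fun h => by_contra fun hne => h (f ω - 1) (by omega)⟩
  have hdisj : Pairwise (Function.onFun Disjoint fun m => f ⁻¹' {m + 1}) := fun i j hij =>
    (Set.disjoint_singleton.2 (by simpa using hij)).preimage f
  rw [hzero, ← measure_iUnion hdisj hf, add_comm, prob_add_prob_compl (MeasurableSet.iUnion hf)]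

theorem measure_preimage_zero_eq_of_forall_succ {Ω Ω' : Type*} [MeasurableSpace Ω]
    [MeasurableSpace Ω'] {μ : Measure Ω} {ν : Measure Ω'} [IsProbabilityMeasure μ]
    [IsProbabilityMeasure ν] {f : Ω → ℕ} {g : Ω' → ℕ} (hf : ∀ m, MeasurableSet (f ⁻¹' {m + 1}))
    (hg : ∀ m, MeasurableSet (g ⁻¹' {m + 1})) (h : ∀ m, μ (f ⁻¹' {m + 1}) = ν (g ⁻¹' {m + 1})) :
    μ (f ⁻¹' {0}) = ν (g ⁻¹' {0}) := by
  have hν := measure_preimage_zero_add_tsum_succ ν hg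
  have hμ := measure_preimage_zero_add_tsum_succ μ hf
  rw [tsum_congr h, ← hν] at hμ
  exact (ENNReal.add_left_inj (ne_top_of_le_ne_top ENNReal.one_ne_top (hν ▸ le_add_self))).1 hμ

/-- The time `τ_{2K}` of the `2K`-th changeover in a sequence of i.i.d. Bernoulli(p)
coin flips has the same distribution as the sum `H₁ + T₁ + ⋯ + H_K + T_K` of `2K`
independent geometric random variables, `K` of them with parameter `q = 1 - p` and
`K` of them with parameter `p`. -/
theorem changeover_time_eq_geometric_sum_distrib
    {Ω Ω' : Type*} [MeasurableSpace Ω] [MeasurableSpace Ω']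
    (μ : Measure Ω) [IsProbabilityMeasure μ]
    (ν : Measure Ω') [IsProbabilityMeasure ν]
    (p : ℝ) (hp : p ∈ Set.Ioo (0 : ℝ) 1)
    (X : ℕ → Ω → Bool)
    (hmX : ∀ j, Measurable (X j))
    (hXindep : iIndepFun X μ)
    (hXdist : ∀ j, μ {ω | X j ω = true} = ENNReal.ofReal p)
    (Z : ℕ → Ω → ℕ)
    (hZ : ∀ n ω, Z n ω = ((Finset.range n).filter (fun j => X j ω ≠ X (j + 1) ω)).card)
    (K : ℕ) (hK : 1 ≤ K)
    (τ : Ω → ℕ)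
    (hτ : ∀ ω, τ ω = sInf {n : ℕ | 1 ≤ n ∧ Z n ω = 2 * K})
    -- `HT (false, i)` is the geometric variable `H_i` (parameter `q = 1 - p`) and
    -- `HT (true, i)` is the geometric variable `T_i` (parameter `p`); all independent.
    (HT : Bool × Fin K → Ω' → ℕ)
    (hmHT : ∀ b, Measurable (HT b))
    (hHTindep : iIndepFun HT ν)
    (hHTpos : ∀ b ω, 1 ≤ HT b ω)
    (hHdist : ∀ i : Fin K, ∀ m : ℕ, 1 ≤ m →
      ν {ω | HT (false, i) ω = m} = ENNReal.ofReal ((1 - p) * p ^ (m - 1)))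
    (hTdist : ∀ i : Fin K, ∀ m : ℕ, 1 ≤ m →
      ν {ω | HT (true, i) ω = m} = ENNReal.ofReal (p * (1 - p) ^ (m - 1))) :
    ∀ n : ℕ, μ {ω | τ ω = n} = ν {ω | ∑ b, HT b ω = n} := by
  obtain rfl : Z = fun n ω => changeovers (X · ω) n := funext₂ hZ
  obtain rfl : τ = fun ω => changeoverTime (X · ω) (2 * K) := funext hτ
  obtain ⟨k, hk⟩ : ∃ k, 2 * K = k + 1 := ⟨2 * K - 1, by omega⟩
  have hsucc : ∀ m, μ {ω | changeoverTime (X · ω) (2 * K) = m + 1} =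
      ν {ω | ∑ b, HT b ω = m + 1} := by
    intro m
    rw [hk, measure_changeoverTime_eq_succ hXindep hmX
        (fun j => measure_eq_bernoulliWeight (hmX j) hp.1.le (hXdist j)),
      ← hk, runsSeries_two_mul, runsSeries_two_mul, ← mul_add,
      bernoulliWeight_true_add_false hp.1.le hp.2.le, mul_one,
      measure_sum_eq_coeff_runSeries_mul_pow hp.1.le hp.2.le hmHT hHTindep hHTpos hHdist hTdist]
  intro n
  rcases n with _ | m
  · exact measure_preimage_zero_eq_of_forall_succ
      (fun m => hk ▸ measurableSet_changeoverTime_eq_succ hmX k m)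
      (fun m => (Finset.measurable_sum _ fun b _ => hmHT b) (measurableSet_singleton _)) hsucc
  · exact hsucc m
end

section
/- Let θ ≥ 1 and F ≥ 2θ + 2 be integers, let ρ_1, ρ_2 > 0 satisfy 2ρ_1 + (F − 2)ρ_2 = 1, and let η, η′ be independent random variables with values in {1, …, F} such that P(η = 1) = P(η = F) = ρ_1 and P(η = i) = ρ_2 for 2 ≤ i ≤ F − 1, and the same for η′. Set ξ := η′ − η and define φ := −|ξ| if |ξ| ≤ θ and φ := |ξ| − 2θ if |ξ| > θ. Then E φ = (1/3) Q(ρ_1, ρ_2), where Q(X, Y) := −6Y(2X + (F − θ − 2)Y)θ² + Y(6X + (F − 2θ − 3)Y)(F − 2θ − 2)(F − 2θ − 1) + 6X²(F − 2θ − 1). -/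
/-!
Let `w` be the common law of `η` and `η'`. By independence `E φ = ∑ᵢ ∑ⱼ wᵢ wⱼ φ(|j - i|)`, and by
symmetry this is `2 ∑_{d ≥ 1} c_d φ(d)` with the lag correlations `c_d = ∑ᵢ wᵢ w_{i+d}`. Since only
the end points `1` and `F` carry weight `ρ₁`, `c_d = 2ρ₁ρ₂ + (F - d - 2)ρ₂²` for `d ≤ F - 2` and
`c_{F-1} = ρ₁²`. What remains is a sum of products of a linear and a piecewise linear function of
`d`, evaluated with the formulas for `∑ d` and `∑ d²`.
-/

open MeasureTheory ProbabilityTheory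

namespace Finset

variable {M : Type*} [AddCommMonoid M]

theorem sum_sum_eq_two_nsmul_sum_sum_filter_lt {α : Type*} [LinearOrder α] (s : Finset α)
    (h : α → α → M) (hsymm : ∀ i j, h i j = h j i) (hdiag : ∀ i, h i i = 0) :
    ∑ i ∈ s, ∑ j ∈ s, h i j = 2 • ∑ i ∈ s, ∑ j ∈ s with i < j, h i j := by
  have hsplit : ∀ i j, h i j = (if i < j then h i j else 0) + (if j < i then h j i else 0) := by
    intro i j
    rcases lt_trichotomy i j with hij | rfl | hij
    · simp [hij, hij.not_gt]
    · simp [hdiag]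
    · simp [hij, hij.not_gt, hsymm i j]
  simp_rw [two_nsmul, sum_filter]
  conv_lhs => rw [sum_congr rfl fun i _ => sum_congr rfl fun j _ => hsplit i j]
  simp_rw [sum_add_distrib]
  rw [sum_comm (s := s) (t := s) (f := fun i j => if j < i then h j i else 0)]

theorem sum_Icc_sum_filter_lt_eq_sum_Icc_sum_Icc_add (F : ℕ) (h : ℕ → ℕ → M) :
    ∑ i ∈ Icc 1 F, ∑ j ∈ Icc 1 F with i < j, h i j
      = ∑ d ∈ Icc 1 (F - 1), ∑ i ∈ Icc 1 (F - d), h i (i + d) := by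
  have hshift : ∀ i, ∑ j ∈ Icc 1 F with i < j, h i j = ∑ d ∈ Icc 1 (F - i), h i (i + d) := by
    intro i
    refine sum_nbij' (· - i) (i + ·) ?_ ?_ ?_ ?_ ?_ <;> intro j hj <;>
      simp only [mem_filter, mem_Icc] at hj ⊢
    all_goals first | omega | rw [Nat.add_sub_cancel' (by omega)]
  simp_rw [hshift]
  exact sum_comm' fun i d => by simp only [mem_Icc]; omega

theorem sum_Icc_sum_Icc_mul_natAbs_sub {R : Type*} [CommSemiring R] (F : ℕ) (w g : ℕ → R)
    (hg : g 0 = 0) :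
    ∑ i ∈ Icc 1 F, ∑ j ∈ Icc 1 F, w i * w j * g ((j : ℤ) - i).natAbs
      = 2 * ∑ d ∈ Icc 1 (F - 1), (∑ i ∈ Icc 1 (F - d), w i * w (i + d)) * g d := by
  rw [sum_sum_eq_two_nsmul_sum_sum_filter_lt _ _
    (fun i j => by rw [← Int.natAbs_neg, neg_sub]; ring) (fun i => by simp [hg]), sum_Icc_sum_filter_lt_eq_sum_Icc_sum_Icc_add, two_nsmul, two_mul]
  simp [sum_mul]

end Finset

open Finset

def endpointWeight (F : ℕ) (ρ₁ ρ₂ : ℝ) (i : ℕ) : ℝ := if i = 1 ∨ i = F then ρ₁ else ρ₂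

section EndpointWeight

variable {F : ℕ} {ρ₁ ρ₂ : ℝ}

theorem sum_Icc_endpointWeight_mul_add {d : ℕ} (hd : 1 ≤ d) (hdF : d + 2 ≤ F) :
    ∑ i ∈ Icc 1 (F - d), endpointWeight F ρ₁ ρ₂ i * endpointWeight F ρ₁ ρ₂ (i + d)
      = 2 * ρ₁ * ρ₂ + ((F : ℝ) - d - 2) * ρ₂ ^ 2 := by
  have hterm : ∀ i ∈ Icc 1 (F - d),
      endpointWeight F ρ₁ ρ₂ i * endpointWeight F ρ₁ ρ₂ (i + d)
        = ρ₂ ^ 2 + ((if i = 1 then ρ₁ * ρ₂ - ρ₂ ^ 2 else 0)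
          + (if i = F - d then ρ₁ * ρ₂ - ρ₂ ^ 2 else 0)) := by
    intro i hi
    rw [mem_Icc] at hi
    unfold endpointWeight
    split_ifs <;> first | (exfalso; omega) | ring
  rw [sum_congr rfl hterm, sum_add_distrib, sum_add_distrib, sum_ite_eq', sum_ite_eq',
    if_pos (by simp; omega), if_pos (by simp; omega), sum_const, Nat.card_Icc, nsmul_eq_mul,
    Nat.add_sub_cancel, Nat.cast_sub (by omega)]
  ring

end EndpointWeight

def edgeWeight (θ d : ℕ) : ℝ := if d ≤ θ then -(d : ℝ) else d - 2 * θ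

section EdgeWeight

variable (a b : ℝ) {θ t : ℕ}

theorem sum_Icc_mul_edgeWeight_of_le (ht : t ≤ θ) :
    ∑ d ∈ Icc 1 t, (a - b * d) * edgeWeight θ d
      = -a * (t * (t + 1) / 2) + b * (t * (t + 1) * (2 * t + 1) / 6) := by
  induction t with
  | zero => simp
  | succ t ih =>
    rw [sum_Icc_succ_top (by omega), ih (by omega), edgeWeight, if_pos ht]
    push_cast
    ring

theorem sum_Icc_mul_edgeWeight_of_ge (ht : θ ≤ t) :
    ∑ d ∈ Icc 1 t, (a - b * d) * edgeWeight θ d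
      = -a * (θ * (θ + 1) / 2) + b * (θ * (θ + 1) * (2 * θ + 1) / 6)
        + a * ((t * (t + 1) - θ * (θ + 1)) / 2 - 2 * θ * (t - θ))
        - b * ((t * (t + 1) * (2 * t + 1) - θ * (θ + 1) * (2 * θ + 1)) / 6
          - 2 * θ * ((t * (t + 1) - θ * (θ + 1)) / 2)) := by
  induction t, ht using Nat.le_induction with
  | base => rw [sum_Icc_mul_edgeWeight_of_le a b le_rfl]; ring
  | succ t ht ih =>
    rw [sum_Icc_succ_top (by omega), ih, edgeWeight, if_neg (by omega)]
    push_cast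
    ring


theorem edgeWeight_natAbs (z : ℤ) :
    edgeWeight θ z.natAbs
      = if |z| ≤ (θ : ℤ) then -((|z| : ℤ) : ℝ) else ((|z| : ℤ) : ℝ) - 2 * θ := by
  simp only [edgeWeight, Int.abs_eq_natAbs, Nat.cast_le, Int.cast_natCast]

end EdgeWeight

theorem sum_Icc_sum_Icc_endpointWeight_mul_edgeWeight {θ F : ℕ} (hF : 2 * θ + 2 ≤ F) (ρ₁ ρ₂ : ℝ) :
    ∑ i ∈ Icc 1 F, ∑ j ∈ Icc 1 F, endpointWeight F ρ₁ ρ₂ i * endpointWeight F ρ₁ ρ₂ j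
        * edgeWeight θ ((j : ℤ) - i).natAbs
      = (1 / 3) * (-6 * ρ₂ * (2 * ρ₁ + ((F : ℝ) - θ - 2) * ρ₂) * θ ^ 2
          + ρ₂ * (6 * ρ₁ + ((F : ℝ) - 2 * θ - 3) * ρ₂)
              * ((F : ℝ) - 2 * θ - 2) * ((F : ℝ) - 2 * θ - 1)
          + 6 * ρ₁ ^ 2 * ((F : ℝ) - 2 * θ - 1)) := by
  rw [sum_Icc_sum_Icc_mul_natAbs_sub _ _ _ (by simp [edgeWeight]),
    show F - 1 = F - 2 + 1 by omega, sum_Icc_succ_top (by omega)]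
  have hlag : ∀ d ∈ Icc 1 (F - 2),
      (∑ i ∈ Icc 1 (F - d), endpointWeight F ρ₁ ρ₂ i * endpointWeight F ρ₁ ρ₂ (i + d))
        * edgeWeight θ d = (2 * ρ₁ * ρ₂ + (F - 2) * ρ₂ ^ 2 - ρ₂ ^ 2 * d) * edgeWeight θ d := by
    intro d hd
    rw [mem_Icc] at hd
    rw [sum_Icc_endpointWeight_mul_add hd.1 (by omega)]
    ring
  rw [sum_congr rfl hlag, sum_Icc_mul_edgeWeight_of_ge _ _ (by omega : θ ≤ F - 2),
    show F - (F - 2 + 1) = 1 by omega, Icc_self, sum_singleton, show 1 + (F - 2 + 1) = F by omega,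
    edgeWeight, if_neg (by omega)]
  simp only [endpointWeight, true_or, or_true, if_true]
  push_cast [Nat.cast_sub (by omega : 2 ≤ F)]
  ring

theorem integral_comp_eq_sum_sum_of_indepFun {Ω α β : Type*} [MeasurableSpace Ω] {μ : Measure Ω}
    [IsFiniteMeasure μ] [MeasurableSpace α] [MeasurableSingletonClass α] [MeasurableSpace β]
    [MeasurableSingletonClass β] {X : Ω → α} {Y : Ω → β} (hX : Measurable X) (hY : Measurable Y)
    (hXY : IndepFun X Y μ) {s : Finset α} {t : Finset β} (hXs : ∀ ω, X ω ∈ s)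
    (hYt : ∀ ω, Y ω ∈ t) (g : α → β → ℝ) :
    ∫ ω, g (X ω) (Y ω) ∂μ
      = ∑ i ∈ s, ∑ j ∈ t, μ.real {ω | X ω = i} * μ.real {ω | Y ω = j} * g i j := by
  classical
  have hmeas : ∀ i j, MeasurableSet ({ω | X ω = i} ∩ {ω | Y ω = j}) := fun i j =>
    (hX (measurableSet_singleton i)).inter (hY (measurableSet_singleton j))
  have hdecomp : ∀ ω, g (X ω) (Y ω)
      = ∑ i ∈ s, ∑ j ∈ t, ({ω | X ω = i} ∩ {ω | Y ω = j}).indicator (fun _ => g i j) ω := by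
    intro ω
    simp [Set.indicator_apply, ite_and, hXs ω, hYt ω]
  have hprob : ∀ i j, μ.real ({ω | X ω = i} ∩ {ω | Y ω = j})
      = μ.real {ω | X ω = i} * μ.real {ω | Y ω = j} := fun i j => by
    simp only [measureReal_def, ← ENNReal.toReal_mul]
    exact congrArg ENNReal.toReal (hXY.measure_inter_preimage_eq_mul _ _
      (measurableSet_singleton i) (measurableSet_singleton j))
  simp_rw [hdecomp]
  rw [integral_finsetSum _ fun i _ => integrable_finsetSum _ fun j _ =>
    (integrable_indicator_iff (hmeas i j)).2 integrableOn_const]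
  refine sum_congr rfl fun i _ => ?_
  rw [integral_finsetSum _ fun j _ => (integrable_indicator_iff (hmeas i j)).2 integrableOn_const]
  simp_rw [integral_indicator_const _ (hmeas _ _), hprob, smul_eq_mul]

theorem measureReal_eq_endpointWeight {Ω : Type*} [MeasurableSpace Ω] {μ : Measure Ω} {F : ℕ}
    {ρ₁ ρ₂ : ℝ} (hρ₁ : 0 ≤ ρ₁) (hρ₂ : 0 ≤ ρ₂) {X : Ω → ℕ}
    (h1 : μ {ω | X ω = 1} = ENNReal.ofReal ρ₁) (hF : μ {ω | X ω = F} = ENNReal.ofReal ρ₁)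
    (hmid : ∀ i, 2 ≤ i → i ≤ F - 1 → μ {ω | X ω = i} = ENNReal.ofReal ρ₂)
    {i : ℕ} (hi : i ∈ Icc 1 F) :
    μ.real {ω | X ω = i} = endpointWeight F ρ₁ ρ₂ i := by
  rw [mem_Icc] at hi
  rw [measureReal_def, endpointWeight]
  split_ifs with hend
  · rcases hend with rfl | rfl
    · rw [h1, ENNReal.toReal_ofReal hρ₁]
    · rw [hF, ENNReal.toReal_ofReal hρ₁]
  · rw [hmid i (by omega) (by omega), ENNReal.toReal_ofReal hρ₂]

theorem expected_weight_eq_general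
    {Ω : Type*} [MeasurableSpace Ω] (μ : Measure Ω) [IsProbabilityMeasure μ]
    (θ F : ℕ) (hF : 2 * θ + 2 ≤ F)
    (ρ1 ρ2 : ℝ) (hρ1 : 0 < ρ1) (hρ2 : 0 < ρ2)
    (η η' : Ω → ℕ)
    (hmη : Measurable η) (hmη' : Measurable η')
    (hval : ∀ ω, η ω ∈ Finset.Icc 1 F) (hval' : ∀ ω, η' ω ∈ Finset.Icc 1 F)
    (hindep : IndepFun η η' μ)
    (hd1 : μ {ω | η ω = 1} = ENNReal.ofReal ρ1)
    (hdF : μ {ω | η ω = F} = ENNReal.ofReal ρ1)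
    (hdmid : ∀ i, 2 ≤ i → i ≤ F - 1 → μ {ω | η ω = i} = ENNReal.ofReal ρ2)
    (hd1' : μ {ω | η' ω = 1} = ENNReal.ofReal ρ1)
    (hdF' : μ {ω | η' ω = F} = ENNReal.ofReal ρ1)
    (hdmid' : ∀ i, 2 ≤ i → i ≤ F - 1 → μ {ω | η' ω = i} = ENNReal.ofReal ρ2) :
    (∫ ω, (if |(η' ω : ℤ) - (η ω : ℤ)| ≤ (θ : ℤ)
        then -((|(η' ω : ℤ) - (η ω : ℤ)| : ℤ) : ℝ)
        else ((|(η' ω : ℤ) - (η ω : ℤ)| : ℤ) : ℝ) - 2 * θ) ∂μ)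
      = (1 / 3) * (-6 * ρ2 * (2 * ρ1 + ((F : ℝ) - θ - 2) * ρ2) * θ ^ 2
          + ρ2 * (6 * ρ1 + ((F : ℝ) - 2 * θ - 3) * ρ2)
              * ((F : ℝ) - 2 * θ - 2) * ((F : ℝ) - 2 * θ - 1)
          + 6 * ρ1 ^ 2 * ((F : ℝ) - 2 * θ - 1)) := by
  simp_rw [← edgeWeight_natAbs]
  rw [integral_comp_eq_sum_sum_of_indepFun hmη hmη' hindep hval hval'
    (fun i j => edgeWeight θ ((j : ℤ) - i).natAbs)]
  rw [← sum_Icc_sum_Icc_endpointWeight_mul_edgeWeight hF]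
  refine sum_congr rfl fun i hi => sum_congr rfl fun j hj => ?_
  rw [measureReal_eq_endpointWeight hρ1.le hρ2.le hd1 hdF hdmid hi,
    measureReal_eq_endpointWeight hρ1.le hρ2.le hd1' hdF' hdmid' hj]

/-- Expected value of the edge weight `φ` for the constrained voter model with `F` opinions
and confidence threshold `θ`, when the two endpoints are independent with the symmetric
distribution `ρ₁` on `{1, F}` and `ρ₂` on `{2, ..., F-1}`:
`E φ = (1/3) Q(ρ₁, ρ₂)` where
`Q(X, Y) = -6Y(2X + (F-θ-2)Y)θ² + Y(6X + (F-2θ-3)Y)(F-2θ-2)(F-2θ-1) + 6X²(F-2θ-1)`. -/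
theorem expected_weight_eq
    {Ω : Type*} [MeasurableSpace Ω] (μ : Measure Ω) [IsProbabilityMeasure μ]
    (θ F : ℕ) (hθ : 1 ≤ θ) (hF : 2 * θ + 2 ≤ F)
    (ρ1 ρ2 : ℝ) (hρ1 : 0 < ρ1) (hρ2 : 0 < ρ2)
    (hsum : 2 * ρ1 + ((F : ℝ) - 2) * ρ2 = 1)
    (η η' : Ω → ℕ)
    (hmη : Measurable η) (hmη' : Measurable η')
    (hval : ∀ ω, η ω ∈ Finset.Icc 1 F) (hval' : ∀ ω, η' ω ∈ Finset.Icc 1 F)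
    (hindep : IndepFun η η' μ)
    (hd1 : μ {ω | η ω = 1} = ENNReal.ofReal ρ1)
    (hdF : μ {ω | η ω = F} = ENNReal.ofReal ρ1)
    (hdmid : ∀ i, 2 ≤ i → i ≤ F - 1 → μ {ω | η ω = i} = ENNReal.ofReal ρ2)
    (hd1' : μ {ω | η' ω = 1} = ENNReal.ofReal ρ1)
    (hdF' : μ {ω | η' ω = F} = ENNReal.ofReal ρ1)
    (hdmid' : ∀ i, 2 ≤ i → i ≤ F - 1 → μ {ω | η' ω = i} = ENNReal.ofReal ρ2) :
    (∫ ω, (if |(η' ω : ℤ) - (η ω : ℤ)| ≤ (θ : ℤ)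
        then -((|(η' ω : ℤ) - (η ω : ℤ)| : ℤ) : ℝ)
        else ((|(η' ω : ℤ) - (η ω : ℤ)| : ℤ) : ℝ) - 2 * θ) ∂μ)
      = (1 / 3) * (-6 * ρ2 * (2 * ρ1 + ((F : ℝ) - θ - 2) * ρ2) * θ ^ 2
          + ρ2 * (6 * ρ1 + ((F : ℝ) - 2 * θ - 3) * ρ2)
              * ((F : ℝ) - 2 * θ - 2) * ((F : ℝ) - 2 * θ - 1)
          + 6 * ρ1 ^ 2 * ((F : ℝ) - 2 * θ - 1)) :=
  expected_weight_eq_general μ θ F hF ρ1 ρ2 hρ1 hρ2 η η' hmη hmη' hval hval' hindep hd1 hdF hdmid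
    hd1' hdF' hdmid'
end

section
/- The polynomial P(X) = 3000 X⁶ − 8204 X⁵ − 23080 X⁴ + 115251 X³ − 37635 X² − 39150 X + 9000 is strictly decreasing on the interval (0, 1/2) and has exactly one root in (0, 1/2). -/
/-!
On `[0, 1/2]` the derivative `P'` is bounded above by the cubic `g(x) = 345753x² - 92320x³ -
75270x - 39150` (the two leading terms of `P'` have nonpositive sum there), and `g` is convex on
`[0, 1/2]` with `g(0), g(1/2) < 0`. Hence `P' < 0`, so `P` is strictly decreasing, and since
`P(0) = 9000 > 0 > P(1/2)` the intermediate value theorem gives exactly one root.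
-/

open Set

theorem existsUnique_zero_of_strictAntiOn {f : ℝ → ℝ} {a b : ℝ} (hab : a ≤ b)
    (hcont : ContinuousOn f (Icc a b)) (hanti : StrictAntiOn f (Ioo a b))
    (ha : 0 < f a) (hb : f b < 0) :
    ∃! x, x ∈ Ioo a b ∧ f x = 0 := by
  obtain ⟨x, hx, hfx⟩ := intermediate_value_Ioo' hab hcont ⟨hb, ha⟩
  exact ⟨x, ⟨hx, hfx⟩, fun y ⟨hy, hfy⟩ => hanti.injOn hy hx (hfy.trans hfx.symm)⟩

def fixationPoly (x : ℝ) : ℝ :=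
  3000 * x ^ 6 - 8204 * x ^ 5 - 23080 * x ^ 4 + 115251 * x ^ 3 - 37635 * x ^ 2 - 39150 * x + 9000

def fixationPolyDeriv (x : ℝ) : ℝ :=
  18000 * x ^ 5 - 41020 * x ^ 4 - 92320 * x ^ 3 + 345753 * x ^ 2 - 75270 * x - 39150

theorem continuous_fixationPoly : Continuous fixationPoly := by
  unfold fixationPoly
  fun_prop

theorem hasDerivAt_fixationPoly (x : ℝ) : HasDerivAt fixationPoly (fixationPolyDeriv x) x := by
  have h := (((((((hasDerivAt_pow 6 x).const_mul 3000).sub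
    ((hasDerivAt_pow 5 x).const_mul 8204)).sub ((hasDerivAt_pow 4 x).const_mul 23080)).add
    ((hasDerivAt_pow 3 x).const_mul 115251)).sub ((hasDerivAt_pow 2 x).const_mul 37635)).sub
    ((hasDerivAt_id' x).const_mul 39150)).add_const 9000
  exact h.congr_deriv (by unfold fixationPolyDeriv; ring)

theorem fixationPolyDeriv_neg {x : ℝ} (hx : x ∈ Ioo (0 : ℝ) (1 / 2)) : fixationPolyDeriv x < 0 := by
  obtain ⟨h0, h1⟩ := hx
  have hlead : 18000 * x ^ 5 - 41020 * x ^ 4 ≤ 0 := by nlinarith [pow_pos h0 4]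
  have hcubic : 345753 * x ^ 2 - 92320 * x ^ 3 - 75270 * x - 39150 < 0 := by
    nlinarith [mul_pos (mul_pos h0 h0) (sub_pos.2 h1), mul_pos h0 (sub_pos.2 h1)]
  unfold fixationPolyDeriv
  linarith

theorem strictAntiOn_fixationPoly : StrictAntiOn fixationPoly (Icc 0 (1 / 2)) := by
  refine strictAntiOn_of_deriv_neg (convex_Icc _ _) continuous_fixationPoly.continuousOn
    fun x hx => ?_
  rw [interior_Icc] at hx
  rw [(hasDerivAt_fixationPoly x).deriv]
  exact fixationPolyDeriv_neg hx

/-- The polynomial `P(X) = 3000X⁶ - 8204X⁵ - 23080X⁴ + 115251X³ - 37635X² - 39150X + 9000`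
is strictly decreasing on `(0, 1/2)` and has exactly one root in `(0, 1/2)`. -/
theorem fixation_polynomial_decreasing_unique_root :
    StrictAntiOn
      (fun X : ℝ => 3000 * X ^ 6 - 8204 * X ^ 5 - 23080 * X ^ 4 + 115251 * X ^ 3
        - 37635 * X ^ 2 - 39150 * X + 9000)
      (Set.Ioo 0 (1 / 2))
    ∧ ∃! x : ℝ, x ∈ Set.Ioo (0 : ℝ) (1 / 2) ∧
        3000 * x ^ 6 - 8204 * x ^ 5 - 23080 * x ^ 4 + 115251 * x ^ 3
          - 37635 * x ^ 2 - 39150 * x + 9000 = 0 := by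
  have hanti : StrictAntiOn fixationPoly (Ioo 0 (1 / 2)) :=
    strictAntiOn_fixationPoly.mono Ioo_subset_Icc_self
  refine ⟨hanti, existsUnique_zero_of_strictAntiOn (by norm_num)
    continuous_fixationPoly.continuousOn hanti ?_ ?_⟩
  · norm_num [fixationPoly]
  · norm_num [fixationPoly]
end
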